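/- An orientation of a split graph S = (E, K) (independent set E, clique K) is semi-transitive if and only if: (1) K is transitively oriented; (2) every vertex of E is of type A, B, or C with its clique-neighbours forming the consecutive segments described below; and (3) for every type C vertex x with break pair (x_s, x_{s+1}), no type A or type B vertex is adjacent to both x_s and x_{s+1}, and no other type C vertex has both x_s and x_{s+1} inside its in-neighbour segment or both inside its out-neighbour segment. -/

import Mathlib

/-!
Forward direction: semi-transitivity is only ever applied to four-vertex paths
`v₀ → v₁ → v₂ → v₃` with chord `v₀ → v₃`. Acyclicity makes the clique transitive; the
four-vertex rule then forces the in- and out-neighbourhoods of every vertex to be segments of the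
Hamiltonian path (initial and final ones when both are non-empty), and forbids a vertex of `E` to
point into, or out of, both ends of a break pair.

Backward direction: an integer potential (`cliqueHeight`) increases along every edge, giving
acyclicity and increasing clique indices along every directed path. On a path with a chord at
most one vertex lies in `E`: of two such vertices one is interior to the path, hence of type C,
and the other would be joined in the same direction to both ends of its break pair. A single
vertex of `E` on the path is joined correctly to every clique vertex of the path because its
neighbourhood is a segment.
-/

/-- `R` is an orientation of `G`: `R` holds only on edges, and each edge gets
exactly one direction. -/
def IsOrientation {V : Type*} (G : SimpleGraph V) (R : V → V → Prop) : Prop :=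
  (∀ x y, R x y → G.Adj x y) ∧ ∀ x y, G.Adj x y → (R x y ↔ ¬ R y x)

/-- `R` has no directed cycles. -/
def Acyclic {V : Type*} (R : V → V → Prop) : Prop :=
  ∀ v, ¬ Relation.TransGen R v v

/-- `R` is semi-transitive: acyclic, and every directed path `p 0 → ⋯ → p k`
whose endpoints are joined by the edge `p 0 → p k` is fully transitive. -/
def SemiTransitive {V : Type*} (R : V → V → Prop) : Prop :=
  Acyclic R ∧
  ∀ (k : ℕ) (p : Fin (k + 1) → V),
    (∀ i : Fin k, R (p i.castSucc) (p i.succ)) →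
    R (p 0) (p (Fin.last k)) →
    ∀ i j : Fin (k + 1), i < j → R (p i) (p j)

/-- `x` is of type A w.r.t. the clique enumeration `c`: all its clique
neighbours point into `x`, and they form a consecutive segment of the
Hamiltonian path of the clique. -/
def TypeA {V : Type*} (G : SimpleGraph V) (R : V → V → Prop)
    {m : ℕ} (c : Fin m → V) (x : V) : Prop :=
  (∀ a : Fin m, G.Adj x (c a) → R (c a) x) ∧
  (∀ a k b : Fin m, a ≤ k → k ≤ b →
    G.Adj x (c a) → G.Adj x (c b) → G.Adj x (c k))

/-- `x` is of type B w.r.t. the clique enumeration `c`: all its clique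
neighbours point out of `x`, and they form a consecutive segment of the
Hamiltonian path of the clique. -/
def TypeB {V : Type*} (G : SimpleGraph V) (R : V → V → Prop)
    {m : ℕ} (c : Fin m → V) (x : V) : Prop :=
  (∀ a : Fin m, G.Adj x (c a) → R x (c a)) ∧
  (∀ a k b : Fin m, a ≤ k → k ≤ b →
    G.Adj x (c a) → G.Adj x (c b) → G.Adj x (c k))

/-- `x` is of type C w.r.t. the clique enumeration `c`: its in-neighbours
form a consecutive initial segment (the source-group) `{0,…,s}` and its
out-neighbours a consecutive final segment (the sink-group) `{t,…}` of the
Hamiltonian path of the clique; `(c s, c t)` is the break pair of `x`. -/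
def TypeC {V : Type*} (G : SimpleGraph V) (R : V → V → Prop)
    {m : ℕ} (c : Fin m → V) (x : V) : Prop :=
  ∃ s t : Fin m, s < t ∧
    (∀ a : Fin m, R (c a) x ↔ a ≤ s) ∧
    (∀ a : Fin m, R x (c a) ↔ t ≤ a)

section

open Relation

variable {V : Type*} {G : SimpleGraph V} {R : V → V → Prop} {K : Set V}

theorem IsOrientation.asymm (hor : IsOrientation G R) {u v : V} (h : R u v) : ¬ R v u :=
  (hor.2 u v (hor.1 u v h)).1 h

theorem IsOrientation.rel_of_not_rel (hor : IsOrientation G R) {u v : V} (hadj : G.Adj u v)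
    (h : ¬ R u v) : R v u :=
  (hor.2 v u hadj.symm).2 h

theorem IsOrientation.rel_or_rel (hor : IsOrientation G R) {u v : V} (hadj : G.Adj u v) :
    R u v ∨ R v u :=
  or_iff_not_imp_left.2 (hor.rel_of_not_rel hadj)

theorem IsOrientation.mem_right_of_rel (hor : IsOrientation G R)
    (hind : ∀ u ∉ K, ∀ v ∉ K, ¬ G.Adj u v) {u v : V} (huv : R u v) (hu : u ∉ K) : v ∈ K :=
  by_contra fun hv => hind u hu v hv (hor.1 u v huv)

theorem IsOrientation.mem_left_of_rel (hor : IsOrientation G R)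
    (hind : ∀ u ∉ K, ∀ v ∉ K, ¬ G.Adj u v) {u v : V} (huv : R u v) (hv : v ∉ K) : u ∈ K :=
  by_contra fun hu => hind u hu v hv (hor.1 u v huv)

theorem acyclic_of_lt {α : Type*} [Preorder α] (f : V → α) (hf : ∀ u v, R u v → f u < f v) :
    Acyclic R := fun v hv =>
  lt_irrefl (f v) (transGen_eq_self (r := @LT.lt α _) ▸ hv.lift f hf)

theorem Acyclic.trans_of_isClique (hac : Acyclic R) (hor : IsOrientation G R)
    (hK : G.IsClique K) {u v w : V} (hu : u ∈ K) (hw : w ∈ K) (huv : R u v) (hvw : R v w) :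
    R u w := by
  rcases eq_or_ne u w with rfl | hne
  · exact absurd hvw (hor.asymm huv)
  by_contra h
  exact hac u (.head huv (.head hvw (.single (hor.rel_of_not_rel (hK hu hw hne) h))))

theorem exists_fin_enum_of_strictTotalOrderOn [Finite K] (hirr : ∀ v ∈ K, ¬ R v v)
    (htrans : ∀ u ∈ K, ∀ v ∈ K, ∀ w ∈ K, R u v → R v w → R u w)
    (htri : ∀ u ∈ K, ∀ v ∈ K, u ≠ v → R u v ∨ R v u) :
    ∃ (m : ℕ) (c : Fin m → V), Function.Injective c ∧ Set.range c = K ∧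
      ∀ a b, R (c a) (c b) ↔ a < b := by
  classical
  let : IsStrictTotalOrder K (fun u v => R u v) :=
    { trichotomous := fun u v huv hvu =>
        Subtype.ext (by_contra fun hne => (htri u u.2 v v.2 hne).elim huv hvu)
      irrefl := fun u => hirr u u.2
      trans := fun u v w => htrans u u.2 v v.2 w w.2 }
  let := linearOrderOfSTO (fun u v : K => R u v)
  have := Fintype.ofFinite K
  let e := monoEquivOfFin K rfl
  refine ⟨_, fun a => (e a).1, Subtype.val_injective.comp e.injective, ?_,
    fun a b => e.lt_iff_lt⟩
  exact (e.surjective.range_comp Subtype.val).trans Subtype.range_coe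

theorem Finite.exists_forall_iff_le {α : Type*} [LinearOrder α] [Finite α] {P : α → Prop}
    (hne : ∃ a, P a) (hdown : ∀ a b, a ≤ b → P b → P a) : ∃ s, ∀ a, P a ↔ a ≤ s := by
  obtain ⟨s, hs, hmax⟩ := Set.exists_max_image {a | P a} id (Set.toFinite _) hne
  exact ⟨s, fun a => ⟨hmax a, fun ha => hdown a s ha hs⟩⟩

theorem Finite.exists_forall_iff_ge {α : Type*} [LinearOrder α] [Finite α] {P : α → Prop}
    (hne : ∃ a, P a) (hup : ∀ a b, a ≤ b → P a → P b) : ∃ t, ∀ a, P a ↔ t ≤ a :=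
  Finite.exists_forall_iff_le (α := αᵒᵈ) hne fun a b hab => hup b a hab

theorem semiTransitive_of_nat_paths (hac : Acyclic R)
    (hpath : ∀ (k : ℕ) (q : ℕ → V), (∀ n < k, R (q n) (q (n + 1))) → R (q 0) (q k) →
      ∀ i j, i < j → j ≤ k → R (q i) (q j)) : SemiTransitive R := by
  refine ⟨hac, fun k p hstep hchord i j hij => ?_⟩
  have hq : ∀ i : Fin (k + 1), p (Fin.clamp i k) = p i :=
    fun i => congrArg p (Fin.ext (min_eq_left (Nat.lt_succ_iff.1 i.2)))
  rw [← hq i, ← hq j]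
  refine hpath k (fun n => p (Fin.clamp n k)) (fun n hn => ?_) ?_ i j hij (Nat.lt_succ_iff.1 j.2)
  · convert hstep ⟨n, hn⟩ using 2 <;> ext <;>
      simp only [Fin.clamp, Fin.castSucc_mk, Fin.succ_mk] <;> omega
  · convert hchord using 2 <;> ext <;> simp [Fin.clamp]

variable {m : ℕ} {c : Fin m → V}

theorem SemiTransitive.rel_of_path4 (hST : SemiTransitive R) {v₀ v₁ v₂ v₃ : V}
    (h₀₁ : R v₀ v₁) (h₁₂ : R v₁ v₂) (h₂₃ : R v₂ v₃) (h₀₃ : R v₀ v₃) :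
    R v₀ v₂ ∧ R v₁ v₃ := by
  have h := hST.2 3 ![v₀, v₁, v₂, v₃] (by intro i; fin_cases i <;> assumption) h₀₃
  exact ⟨h 0 2 (by decide), h 1 3 (by decide)⟩

theorem Acyclic.lt_of_rel_of_rel (hac : Acyclic R) (hcl : ∀ a b, R (c a) (c b) ↔ a < b)
    {x : V} {a b : Fin m} (hin : R (c a) x) (hout : R x (c b)) : a < b := by
  by_contra! hba
  rcases hba.eq_or_lt with rfl | hba
  · exact hac x (.head hout (.single hin))
  · exact hac x (.head hout (.head ((hcl b a).2 hba) (.single hin)))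

theorem SemiTransitive.rel_into_of_le_of_le (hST : SemiTransitive R)
    (hcl : ∀ a b, R (c a) (c b) ↔ a < b) {x : V} {a k b : Fin m}
    (ha : R (c a) x) (hb : R (c b) x) (hak : a ≤ k) (hkb : k ≤ b) : R (c k) x := by
  rcases hkb.eq_or_lt with rfl | hkb
  · exact hb
  rcases hak.eq_or_lt with rfl | hak
  · exact ha
  exact (hST.rel_of_path4 ((hcl a k).2 hak) ((hcl k b).2 hkb) hb ha).2

theorem SemiTransitive.rel_from_of_le_of_le (hST : SemiTransitive R)
    (hcl : ∀ a b, R (c a) (c b) ↔ a < b) {x : V} {a k b : Fin m}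
    (ha : R x (c a)) (hb : R x (c b)) (hak : a ≤ k) (hkb : k ≤ b) : R x (c k) := by
  rcases hak.eq_or_lt with rfl | hak
  · exact ha
  rcases hkb.eq_or_lt with rfl | hkb
  · exact hb
  exact (hST.rel_of_path4 ha ((hcl a k).2 hak) ((hcl k b).2 hkb) hb).1

theorem SemiTransitive.rel_into_of_le (hST : SemiTransitive R)
    (hcl : ∀ a b, R (c a) (c b) ↔ a < b) {x : V} {a a' b : Fin m}
    (ha' : R (c a') x) (hb : R x (c b)) (ha : a ≤ a') : R (c a) x := by
  rcases ha.eq_or_lt with rfl | ha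
  · exact ha'
  have hab : a < b := ha.trans (hST.1.lt_of_rel_of_rel hcl ha' hb)
  exact (hST.rel_of_path4 ((hcl a a').2 ha) ha' hb ((hcl a b).2 hab)).1

theorem SemiTransitive.rel_from_of_le (hST : SemiTransitive R)
    (hcl : ∀ a b, R (c a) (c b) ↔ a < b) {x : V} {a b b' : Fin m}
    (ha : R (c a) x) (hb' : R x (c b')) (hb : b' ≤ b) : R x (c b) := by
  rcases hb.eq_or_lt with rfl | hb
  · exact hb'
  have hab : a < b := (hST.1.lt_of_rel_of_rel hcl ha hb').trans hb
  exact (hST.rel_of_path4 ha hb' ((hcl b' b).2 hb) ((hcl a b).2 hab)).2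

theorem SemiTransitive.typeC_of_rel_of_rel (hST : SemiTransitive R)
    (hcl : ∀ a b, R (c a) (c b) ↔ a < b) {x : V} {a b : Fin m}
    (ha : R (c a) x) (hb : R x (c b)) : TypeC G R c x := by
  obtain ⟨s, hs⟩ := Finite.exists_forall_iff_le ⟨a, ha⟩
    fun _ _ hle h => hST.rel_into_of_le hcl h hb hle
  obtain ⟨t, ht⟩ := Finite.exists_forall_iff_ge ⟨b, hb⟩
    fun _ _ hle h => hST.rel_from_of_le hcl ha h hle
  exact ⟨s, t, hST.1.lt_of_rel_of_rel hcl ((hs s).2 le_rfl) ((ht t).2 le_rfl), hs, ht⟩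

theorem SemiTransitive.typeA_or_typeB_or_typeC (hST : SemiTransitive R)
    (hor : IsOrientation G R) (hcl : ∀ a b, R (c a) (c b) ↔ a < b) (x : V) :
    TypeA G R c x ∨ TypeB G R c x ∨ TypeC G R c x := by
  by_cases hin : ∃ a, R (c a) x
  · obtain ⟨a, ha⟩ := hin
    by_cases hout : ∃ b, R x (c b)
    · obtain ⟨b, hb⟩ := hout
      exact .inr (.inr (hST.typeC_of_rel_of_rel hcl ha hb))
    simp only [not_exists] at hout
    have hdir : ∀ a, G.Adj x (c a) → R (c a) x := fun a hadj => hor.rel_of_not_rel hadj (hout a)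
    exact .inl ⟨hdir, fun a k b hak hkb ha hb =>
      (hor.1 _ _ (hST.rel_into_of_le_of_le hcl (hdir a ha) (hdir b hb) hak hkb)).symm⟩
  simp only [not_exists] at hin
  have hdir : ∀ a, G.Adj x (c a) → R x (c a) :=
    fun a hadj => hor.rel_of_not_rel hadj.symm (hin a)
  exact .inr (.inl ⟨hdir, fun a k b hak hkb ha hb =>
    hor.1 _ _ (hST.rel_from_of_le_of_le hcl (hdir a ha) (hdir b hb) hak hkb)⟩)

def BreakPairCondition (G : SimpleGraph V) (K : Set V) (R : V → V → Prop) (c : Fin m → V) :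
    Prop :=
  ∀ x, x ∉ K → ∀ s t : Fin m, s < t →
    (∀ a : Fin m, R (c a) x ↔ a ≤ s) →
    (∀ a : Fin m, R x (c a) ↔ t ≤ a) →
    ∀ y, y ∉ K → y ≠ x →
      (((TypeA G R c y ∨ TypeB G R c y) →
          ¬ (G.Adj y (c s) ∧ G.Adj y (c t))) ∧
       (∀ s' t' : Fin m, s' < t' →
          (∀ a : Fin m, R (c a) y ↔ a ≤ s') →
          (∀ a : Fin m, R y (c a) ↔ t' ≤ a) →
          ¬ t ≤ s' ∧ ¬ t' ≤ s))

/-- Conditions (1)–(3), with `c` listing the clique along its Hamiltonian path. -/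
structure SplitConditions (G : SimpleGraph V) (K : Set V) (R : V → V → Prop)
    (c : Fin m → V) : Prop where
  injective : Function.Injective c
  range_eq : Set.range c = K
  rel_iff : ∀ a b, R (c a) (c b) ↔ a < b
  type_of_not_mem : ∀ x, x ∉ K → TypeA G R c x ∨ TypeB G R c x ∨ TypeC G R c x
  breakPair : BreakPairCondition G K R c

theorem SemiTransitive.breakPairCondition (hST : SemiTransitive R) (hor : IsOrientation G R)
    (hind : ∀ u ∉ K, ∀ v ∉ K, ¬ G.Adj u v) : BreakPairCondition G K R c := by
  intro x hx s t hst hin hout y hy _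
  have hs : R (c s) x := (hin s).2 le_rfl
  have ht : R x (c t) := (hout t).2 le_rfl
  have not_into : ¬ (R (c s) y ∧ R (c t) y) := fun ⟨hsy, hty⟩ =>
    hind x hx y hy (hor.1 _ _ (hST.rel_of_path4 hs ht hty hsy).2)
  have not_from : ¬ (R y (c s) ∧ R y (c t)) := fun ⟨hys, hyt⟩ =>
    hind y hy x hx (hor.1 _ _ (hST.rel_of_path4 hys hs ht hyt).1)
  refine ⟨?_, fun s' t' _ hin' hout' =>
    ⟨fun hts' => not_into ⟨(hin' s).2 (hst.le.trans hts'), (hin' t).2 hts'⟩,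
     fun ht's => not_from ⟨(hout' s).2 ht's, (hout' t).2 (ht's.trans hst.le)⟩⟩⟩
  rintro (hA | hB) ⟨hys, hyt⟩
  · exact not_into ⟨hA.1 s hys, hA.1 t hyt⟩
  · exact not_from ⟨hB.1 s hys, hB.1 t hyt⟩

theorem SemiTransitive.exists_splitConditions [Finite K] (hST : SemiTransitive R)
    (hK : G.IsClique K) (hind : ∀ u ∉ K, ∀ v ∉ K, ¬ G.Adj u v) (hor : IsOrientation G R) :
    ∃ (m : ℕ) (c : Fin m → V), SplitConditions G K R c := by
  obtain ⟨m, c, hinj, hrange, hcl⟩ := exists_fin_enum_of_strictTotalOrderOn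
    (fun v _ h => G.irrefl (hor.1 v v h))
    (fun _ hu _ _ _ hw => hST.1.trans_of_isClique hor hK hu hw)
    (fun _ hu _ hv hne => hor.rel_or_rel (hK hu hv hne))
  exact ⟨m, c, hinj, hrange, hcl, fun x _ => hST.typeA_or_typeB_or_typeC hor hcl x,
    hST.breakPairCondition hor hind⟩

open Classical in
/-- `c a` sits at height `2a+1` and every other vertex just above its highest in-neighbour in
the clique. -/
noncomputable def cliqueHeight (R : V → V → Prop) (c : Fin m → V) (v : V) : ℕ :=
  Finset.univ.sup fun a : Fin m =>
    if R (c a) v then 2 * (a : ℕ) + 2 else if c a = v then 2 * (a : ℕ) + 1 else 0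

theorem le_cliqueHeight_of_rel {v : V} {a : Fin m} (h : R (c a) v) :
    2 * (a : ℕ) + 2 ≤ cliqueHeight R c v := by
  refine le_trans ?_ (Finset.le_sup (Finset.mem_univ a))
  rw [if_pos h]

theorem le_cliqueHeight_self (a : Fin m) : 2 * (a : ℕ) + 1 ≤ cliqueHeight R c (c a) := by
  refine le_trans ?_ (Finset.le_sup (Finset.mem_univ a))
  by_cases h : R (c a) (c a) <;> simp [h]

theorem cliqueHeight_le {v : V} {n : ℕ} (hin : ∀ a, R (c a) v → 2 * (a : ℕ) + 2 ≤ n)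
    (hself : ∀ a, c a = v → 2 * (a : ℕ) + 1 ≤ n) : cliqueHeight R c v ≤ n :=
  Finset.sup_le fun a _ => by
    split_ifs with h h'
    exacts [hin a h, hself a h', n.zero_le]

namespace SplitConditions

variable {x : V}

theorem exists_eq (h : SplitConditions G K R c) {v : V} (hv : v ∈ K) : ∃ a, c a = v := by
  rwa [← h.range_eq] at hv

theorem mem (h : SplitConditions G K R c) (a : Fin m) : c a ∈ K :=
  h.range_eq ▸ Set.mem_range_self a

theorem typeC_of_rel_of_rel (h : SplitConditions G K R c) (hor : IsOrientation G R)
    (hx : x ∉ K) {a b : Fin m} (ha : R (c a) x) (hb : R x (c b)) : TypeC G R c x := by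
  rcases h.type_of_not_mem x hx with hA | hB | hC
  · exact absurd (hA.1 b (hor.1 _ _ hb)) (hor.asymm hb)
  · exact absurd (hB.1 a (hor.1 _ _ ha).symm) (hor.asymm ha)
  · exact hC

theorem lt_of_rel_of_rel (h : SplitConditions G K R c) (hor : IsOrientation G R)
    (hx : x ∉ K) {a b : Fin m} (ha : R (c a) x) (hb : R x (c b)) : a < b := by
  obtain ⟨s, t, hst, hin, hout⟩ := h.typeC_of_rel_of_rel hor hx ha hb
  exact ((hin a).1 ha).trans_lt (hst.trans_le ((hout b).1 hb))

theorem rel_into_of_le_of_le (h : SplitConditions G K R c) (hor : IsOrientation G R)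
    (hx : x ∉ K) {a k b : Fin m} (ha : R (c a) x) (hb : R (c b) x) (hak : a ≤ k)
    (hkb : k ≤ b) : R (c k) x := by
  rcases h.type_of_not_mem x hx with hA | hB | ⟨s, t, -, hin, -⟩
  · exact hA.1 k (hA.2 a k b hak hkb (hor.1 _ _ ha).symm (hor.1 _ _ hb).symm)
  · exact absurd (hB.1 a (hor.1 _ _ ha).symm) (hor.asymm ha)
  · exact (hin k).2 (hkb.trans ((hin b).1 hb))

theorem rel_from_of_le_of_le (h : SplitConditions G K R c) (hor : IsOrientation G R)
    (hx : x ∉ K) {a k b : Fin m} (ha : R x (c a)) (hb : R x (c b)) (hak : a ≤ k)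
    (hkb : k ≤ b) : R x (c k) := by
  rcases h.type_of_not_mem x hx with hA | hB | ⟨s, t, -, -, hout⟩
  · exact absurd (hA.1 a (hor.1 _ _ ha)) (hor.asymm ha)
  · exact hB.1 k (hB.2 a k b hak hkb (hor.1 _ _ ha) (hor.1 _ _ hb))
  · exact (hout k).2 (((hout a).1 ha).trans hak)

theorem not_rel_into_both (h : SplitConditions G K R c) (hor : IsOrientation G R) {y : V}
    (hy : y ∉ K) {s t : Fin m} (hst : s < t) (hin : ∀ a, R (c a) y ↔ a ≤ s)
    (hout : ∀ a, R y (c a) ↔ t ≤ a) (hx : x ∉ K) : ¬ (R (c s) x ∧ R (c t) x) := by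
  rintro ⟨hsx, htx⟩
  rcases eq_or_ne x y with rfl | hxy
  · exact hor.asymm htx ((hout t).2 le_rfl)
  have hpair := h.breakPair y hy s t hst hin hout x hx hxy
  rcases h.type_of_not_mem x hx with hA | hB | ⟨s', t', hst', hin', hout'⟩
  · exact hpair.1 (.inl hA) ⟨(hor.1 _ _ hsx).symm, (hor.1 _ _ htx).symm⟩
  · exact hor.asymm hsx (hB.1 s (hor.1 _ _ hsx).symm)
  · exact (hpair.2 s' t' hst' hin' hout').1 ((hin' t).1 htx)

theorem not_rel_from_both (h : SplitConditions G K R c) (hor : IsOrientation G R) {y : V}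
    (hy : y ∉ K) {s t : Fin m} (hst : s < t) (hin : ∀ a, R (c a) y ↔ a ≤ s)
    (hout : ∀ a, R y (c a) ↔ t ≤ a) (hx : x ∉ K) : ¬ (R x (c s) ∧ R x (c t)) := by
  rintro ⟨hxs, hxt⟩
  rcases eq_or_ne x y with rfl | hxy
  · exact hor.asymm hxs ((hin s).2 le_rfl)
  have hpair := h.breakPair y hy s t hst hin hout x hx hxy
  rcases h.type_of_not_mem x hx with hA | hB | ⟨s', t', hst', hin', hout'⟩
  · exact hor.asymm hxs (hA.1 s (hor.1 _ _ hxs))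
  · exact hpair.1 (.inr hB) ⟨hor.1 _ _ hxs, hor.1 _ _ hxt⟩
  · exact (hpair.2 s' t' hst' hin' hout').2 ((hout' s).1 hxs)

theorem cliqueHeight_apply (h : SplitConditions G K R c) (a : Fin m) :
    cliqueHeight R c (c a) = 2 * (a : ℕ) + 1 := by
  refine le_antisymm (cliqueHeight_le (fun b hb => ?_) fun b hb => ?_) (le_cliqueHeight_self a)
  · have := (h.rel_iff b a).1 hb
    omega
  · rw [h.injective hb]

theorem cliqueHeight_lt_of_rel (h : SplitConditions G K R c) (hor : IsOrientation G R)
    (hind : ∀ u ∉ K, ∀ v ∉ K, ¬ G.Adj u v) {u v : V} (huv : R u v) :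
    cliqueHeight R c u < cliqueHeight R c v := by
  by_cases hu : u ∈ K
  · obtain ⟨a, rfl⟩ := h.exists_eq hu
    have := le_cliqueHeight_of_rel huv
    rw [h.cliqueHeight_apply]
    omega
  obtain ⟨b, rfl⟩ := h.exists_eq (hor.mem_right_of_rel hind huv hu)
  have : cliqueHeight R c u ≤ 2 * b := cliqueHeight_le
    (fun a ha => by have := h.lt_of_rel_of_rel hor hu ha huv; omega)
    (fun a ha => absurd (ha ▸ h.mem a) hu)
  rw [h.cliqueHeight_apply]
  omega

theorem acyclic (h : SplitConditions G K R c) (hor : IsOrientation G R)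
    (hind : ∀ u ∉ K, ∀ v ∉ K, ¬ G.Adj u v) : Acyclic R :=
  acyclic_of_lt (cliqueHeight R c) fun _ _ => h.cliqueHeight_lt_of_rel hor hind

section Path

variable {q : ℕ → V} {k : ℕ}

theorem cliqueHeight_lt_of_path (h : SplitConditions G K R c) (hor : IsOrientation G R)
    (hind : ∀ u ∉ K, ∀ v ∉ K, ¬ G.Adj u v) (hstep : ∀ n < k, R (q n) (q (n + 1)))
    {i j : ℕ} (hij : i < j) (hjk : j ≤ k) : cliqueHeight R c (q i) < cliqueHeight R c (q j) :=
  strictMonoOn_Iic_of_lt_succ (ψ := fun n => cliqueHeight R c (q n)) (fun n hn => by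
    simpa only [Order.succ_eq_add_one] using h.cliqueHeight_lt_of_rel hor hind (hstep n hn))
    (hij.le.trans hjk) hjk hij

theorem index_lt_of_path (h : SplitConditions G K R c) (hor : IsOrientation G R)
    (hind : ∀ u ∉ K, ∀ v ∉ K, ¬ G.Adj u v) (hstep : ∀ n < k, R (q n) (q (n + 1)))
    {i j : ℕ} (hij : i < j) (hjk : j ≤ k) {a b : Fin m} (ha : c a = q i) (hb : c b = q j) :
    a < b := by
  have := h.cliqueHeight_lt_of_path hor hind hstep hij hjk
  rw [← ha, ← hb, h.cliqueHeight_apply, h.cliqueHeight_apply] at this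
  omega

theorem index_le_of_path (h : SplitConditions G K R c) (hor : IsOrientation G R)
    (hind : ∀ u ∉ K, ∀ v ∉ K, ¬ G.Adj u v) (hstep : ∀ n < k, R (q n) (q (n + 1)))
    {i j : ℕ} (hij : i ≤ j) (hjk : j ≤ k) {a b : Fin m} (ha : c a = q i) (hb : c b = q j) :
    a ≤ b := by
  rcases hij.eq_or_lt with rfl | hij
  · exact (h.injective (ha.trans hb.symm)).le
  · exact (h.index_lt_of_path hor hind hstep hij hjk ha hb).le

theorem rel_from_of_path (h : SplitConditions G K R c) (hor : IsOrientation G R)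
    (hind : ∀ u ∉ K, ∀ v ∉ K, ¬ G.Adj u v) (hstep : ∀ n < k, R (q n) (q (n + 1)))
    (hchord : R (q 0) (q k)) {i j : ℕ} (hij : i < j) (hjk : j ≤ k) (hx : q i ∉ K)
    {b : Fin m} (hb : c b = q j) : R (q i) (c b) := by
  obtain ⟨b₁, hb₁⟩ := h.exists_eq (hor.mem_right_of_rel hind (hstep i (by omega)) hx)
  have hxb₁ : R (q i) (c b₁) := hb₁ ▸ hstep i (by omega)
  have hb₁b : b₁ ≤ b := h.index_le_of_path hor hind hstep hij hjk hb₁ hb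
  rcases i with _ | i
  · obtain ⟨e, he⟩ := h.exists_eq (hor.mem_right_of_rel hind hchord hx)
    exact h.rel_from_of_le_of_le hor hx hxb₁ (he ▸ hchord) hb₁b
      (h.index_le_of_path hor hind hstep hjk le_rfl hb he)
  · obtain ⟨a, ha⟩ := h.exists_eq (hor.mem_left_of_rel hind (hstep i (by omega)) hx)
    obtain ⟨s, t, -, -, hout⟩ :=
      h.typeC_of_rel_of_rel hor hx (ha ▸ hstep i (by omega)) hxb₁
    exact (hout b).2 (((hout b₁).1 hxb₁).trans hb₁b)

theorem rel_into_of_path (h : SplitConditions G K R c) (hor : IsOrientation G R)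
    (hind : ∀ u ∉ K, ∀ v ∉ K, ¬ G.Adj u v) (hstep : ∀ n < k, R (q n) (q (n + 1)))
    (hchord : R (q 0) (q k)) {i j : ℕ} (hij : i < j) (hjk : j ≤ k) (hy : q j ∉ K)
    {a : Fin m} (ha : c a = q i) : R (c a) (q j) := by
  obtain ⟨j, rfl⟩ : ∃ j', j = j' + 1 := ⟨j - 1, by omega⟩
  obtain ⟨a₁, ha₁⟩ := h.exists_eq (hor.mem_left_of_rel hind (hstep j (by omega)) hy)
  have hya₁ : R (c a₁) (q (j + 1)) := ha₁ ▸ hstep j (by omega)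
  have haa₁ : a ≤ a₁ := h.index_le_of_path hor hind hstep (by omega) (by omega) ha ha₁
  rcases (by omega : j + 1 < k ∨ j + 1 = k) with hjk | rfl
  · obtain ⟨b, hb⟩ := h.exists_eq (hor.mem_right_of_rel hind (hstep (j + 1) hjk) hy)
    obtain ⟨s, t, -, hin, -⟩ :=
      h.typeC_of_rel_of_rel hor hy hya₁ (hb ▸ hstep (j + 1) hjk)
    exact (hin a).2 (haa₁.trans ((hin a₁).1 hya₁))
  · obtain ⟨e, he⟩ := h.exists_eq (hor.mem_left_of_rel hind hchord hy)
    exact h.rel_into_of_le_of_le hor hy (he ▸ hchord) hya₁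
      (h.index_le_of_path hor hind hstep (Nat.zero_le i) (by omega) he ha) haa₁

theorem mem_of_path (h : SplitConditions G K R c) (hor : IsOrientation G R)
    (hind : ∀ u ∉ K, ∀ v ∉ K, ¬ G.Adj u v) (hstep : ∀ n < k, R (q n) (q (n + 1)))
    (hchord : R (q 0) (q k)) {i j : ℕ} (hij : i < j) (hjk : j ≤ k) (hx : q i ∉ K) :
    q j ∈ K := by
  by_contra hy
  obtain ⟨b₁, hb₁⟩ := h.exists_eq (hor.mem_right_of_rel hind (hstep i (by omega)) hx)
  obtain ⟨j, rfl⟩ : ∃ j', j = j' + 1 := ⟨j - 1, by omega⟩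
  obtain ⟨a₂, ha₂⟩ := h.exists_eq (hor.mem_left_of_rel hind (hstep j (by omega)) hy)
  have hxb₁ : R (q i) (c b₁) := hb₁ ▸ hstep i (by omega)
  have hya₂ : R (c a₂) (q (j + 1)) := ha₂ ▸ hstep j (by omega)
  have hij : i < j := lt_of_le_of_ne (by omega) fun hij => hx (hij ▸ ha₂ ▸ h.mem a₂)
  rcases (by omega : j + 1 < k ∨ j + 1 = k) with hjk | rfl
  · obtain ⟨b₂, hb₂⟩ := h.exists_eq (hor.mem_right_of_rel hind (hstep (j + 1) hjk) hy)
    have hyb₂ : R (q (j + 1)) (c b₂) := hb₂ ▸ hstep (j + 1) hjk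
    obtain ⟨s, t, hst, hin, hout⟩ := h.typeC_of_rel_of_rel hor hy hya₂ hyb₂
    have hxa₂ := h.rel_from_of_path hor hind hstep hchord hij (by omega) hx ha₂
    have hxb₂ := h.rel_from_of_path hor hind hstep hchord (by omega) hjk hx hb₂
    have has := (hin a₂).1 hya₂
    have htb := (hout b₂).1 hyb₂
    exact h.not_rel_from_both hor hy hst hin hout hx
      ⟨h.rel_from_of_le_of_le hor hx hxa₂ hxb₂ has (hst.le.trans htb),
       h.rel_from_of_le_of_le hor hx hxa₂ hxb₂ (has.trans hst.le) htb⟩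
  · rcases i with _ | i
    · exact hx (hor.mem_left_of_rel hind hchord hy)
    obtain ⟨a₁, ha₁⟩ := h.exists_eq (hor.mem_left_of_rel hind (hstep i (by omega)) hx)
    have hxa₁ : R (c a₁) (q (i + 1)) := ha₁ ▸ hstep i (by omega)
    obtain ⟨s, t, hst, hin, hout⟩ := h.typeC_of_rel_of_rel hor hx hxa₁ hxb₁
    have hya₁ := h.rel_into_of_path hor hind hstep hchord (by omega) le_rfl hy ha₁
    have hyb₁ := h.rel_into_of_path hor hind hstep hchord (by omega) le_rfl hy hb₁
    have has := (hin a₁).1 hxa₁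
    have htb := (hout b₁).1 hxb₁
    exact h.not_rel_into_both hor hx hst hin hout hy
      ⟨h.rel_into_of_le_of_le hor hy hya₁ hyb₁ has (hst.le.trans htb),
       h.rel_into_of_le_of_le hor hy hya₁ hyb₁ (has.trans hst.le) htb⟩

theorem rel_of_path (h : SplitConditions G K R c) (hor : IsOrientation G R)
    (hind : ∀ u ∉ K, ∀ v ∉ K, ¬ G.Adj u v) (hstep : ∀ n < k, R (q n) (q (n + 1)))
    (hchord : R (q 0) (q k)) {i j : ℕ} (hij : i < j) (hjk : j ≤ k) : R (q i) (q j) := by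
  by_cases hx : q i ∈ K
  · obtain ⟨a, ha⟩ := h.exists_eq hx
    rw [← ha]
    by_cases hy : q j ∈ K
    · obtain ⟨b, hb⟩ := h.exists_eq hy
      rw [← hb]
      exact (h.rel_iff a b).2 (h.index_lt_of_path hor hind hstep hij hjk ha hb)
    · exact h.rel_into_of_path hor hind hstep hchord hij hjk hy ha
  · obtain ⟨b, hb⟩ := h.exists_eq (h.mem_of_path hor hind hstep hchord hij hjk hx)
    rw [← hb]
    exact h.rel_from_of_path hor hind hstep hchord hij hjk hx hb

end Path

theorem semiTransitive (h : SplitConditions G K R c) (hor : IsOrientation G R)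
    (hind : ∀ u ∉ K, ∀ v ∉ K, ¬ G.Adj u v) : SemiTransitive R :=
  semiTransitive_of_nat_paths (h.acyclic hor hind) fun _ _ hstep hchord _ _ =>
    h.rel_of_path hor hind hstep hchord

end SplitConditions

end

/-- Classification of semi-transitive orientations of a split graph `S=(E,K)`:
an orientation is semi-transitive iff (1) the clique `K` is transitively
oriented (enumerate it by `c` along its Hamiltonian path), (2) every vertex of
the independent set is of type A, B or C, and (3) for every type C vertex `x`
with break pair `(c s, c t)`, no type A or B vertex is adjacent to both `c s`
and `c t`, and no other type C vertex has both `c s` and `c t` inside its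
source-group or both inside its sink-group. -/
theorem semiTransitive_split_iff {V : Type*} [Fintype V]
    (G : SimpleGraph V) (K : Set V)
    (hclique : ∀ u ∈ K, ∀ v ∈ K, u ≠ v → G.Adj u v)
    (hind : ∀ u ∉ K, ∀ v ∉ K, ¬ G.Adj u v)
    (R : V → V → Prop) (hor : IsOrientation G R) :
    SemiTransitive R ↔
    ∃ (m : ℕ) (c : Fin m → V), Function.Injective c ∧ Set.range c = K ∧
      (∀ a b : Fin m, R (c a) (c b) ↔ a < b) ∧
      (∀ x, x ∉ K → (TypeA G R c x ∨ TypeB G R c x ∨ TypeC G R c x)) ∧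
      (∀ x, x ∉ K → ∀ s t : Fin m, s < t →
        (∀ a : Fin m, R (c a) x ↔ a ≤ s) →
        (∀ a : Fin m, R x (c a) ↔ t ≤ a) →
        ∀ y, y ∉ K → y ≠ x →
          (((TypeA G R c y ∨ TypeB G R c y) →
              ¬ (G.Adj y (c s) ∧ G.Adj y (c t))) ∧
           (∀ s' t' : Fin m, s' < t' →
              (∀ a : Fin m, R (c a) y ↔ a ≤ s') →
              (∀ a : Fin m, R y (c a) ↔ t' ≤ a) →
              ¬ t ≤ s' ∧ ¬ t' ≤ s))) := by
  constructor
  · intro hST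
    obtain ⟨m, c, h⟩ := hST.exists_splitConditions hclique hind hor
    exact ⟨m, c, h.injective, h.range_eq, h.rel_iff, h.type_of_not_mem, h.breakPair⟩
  · rintro ⟨m, c, hinj, hrange, hcl, htypes, hbreak⟩
    exact SplitConditions.semiTransitive ⟨hinj, hrange, hcl, htypes, hbreak⟩ hor hind
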